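/- Let (γ_1, γ_2) be a bad pair in the root system C_n: γ_1 = α_i+...+α_{j−1}+2(α_j+...+α_{n−1})+β and γ_2 = 2(α_i+...+α_{n−1})+β with 1 ≤ i < j ≤ n. Let ξ be a positive root with ht(γ_1) ≤ ht(ξ) < ht(γ_2) such that s_{γ_2}(ξ) is a negative root. Then there exists an integer p with i < p ≤ j such that ξ = α_i + ... + α_{p−1} + 2(α_p + ... + α_{n−1}) + β. -/

import Mathlib

/-!
Pairing with `2e_i` reads off the `i`-th coordinate, so
`ht (s_{2e_i} ξ) = ht ξ - ξ_i · ht (2e_i)`. Heights of positive roots are positive, hence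
`s_{2e_i} ξ` can only be negative when `ξ_i > 0`, which leaves `e_i - e_b`, `e_i + e_b` (`i < b`)
and `2e_i` (for `e_a + e_i` with `a < i` the reflection is the positive root `e_a - e_i`).
The height window then rules out `e_i - e_b`, whose height `b - i` is below `ht (e_i + e_j)`,
and `2e_i = γ₂`, and turns `ht (e_i + e_j) ≤ ht (e_i + e_b)` into `b ≤ j`.
-/

namespace CnRoots

/-- The standard basis vector `e_i` of `ℚ^n` (`1`-indexed: `1 ≤ i ≤ n`). -/
def e (n i : ℕ) : Fin n → ℚ := fun j => if (j : ℕ) + 1 = i then 1 else 0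

/-- The standard inner product on `ℚ^n`. -/
def inn {n : ℕ} (x y : Fin n → ℚ) : ℚ := ∑ j, x j * y j

/-- The pairing `⟨x, y^∨⟩ = 2(x,y)/(y,y)` of a vector with the coroot of `y`. -/
def pairing {n : ℕ} (x y : Fin n → ℚ) : ℚ := 2 * inn x y / inn y y

/-- Height of a root of `C_n`, computed by pairing with `ρ^∨`. -/
def ht {n : ℕ} (x : Fin n → ℚ) : ℚ := ∑ j, x j * ((n : ℚ) - (j : ℚ) - 1 / 2)

/-- Positive roots of `C_n`: `e_i − e_j` and `e_i + e_j` for `1 ≤ i < j ≤ n`, and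
`2e_i` for `1 ≤ i ≤ n`. -/
def IsPosRoot (n : ℕ) (γ : Fin n → ℚ) : Prop :=
  (∃ i j : ℕ, 1 ≤ i ∧ i < j ∧ j ≤ n ∧ γ = e n i - e n j) ∨
  (∃ i j : ℕ, 1 ≤ i ∧ i < j ∧ j ≤ n ∧ γ = e n i + e n j) ∨
  (∃ i : ℕ, 1 ≤ i ∧ i ≤ n ∧ γ = (2 : ℚ) • e n i)

/-- The reflection in the root `γ`: `s_γ(δ) = δ − ⟨δ, γ^∨⟩·γ`. -/
def sRefl {n : ℕ} (γ δ : Fin n → ℚ) : Fin n → ℚ := δ - pairing δ γ • γ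

section

variable {n a i : ℕ}

lemma ht_add (x y : Fin n → ℚ) : ht (x + y) = ht x + ht y := by
  simp [ht, add_mul, Finset.sum_add_distrib]

lemma ht_sub (x y : Fin n → ℚ) : ht (x - y) = ht x - ht y := by
  simp [ht, sub_mul, Finset.sum_sub_distrib]

lemma ht_neg (x : Fin n → ℚ) : ht (-x) = -ht x := by
  simp [ht, Finset.sum_neg_distrib]

lemma ht_smul (c : ℚ) (x : Fin n → ℚ) : ht (c • x) = c * ht x := by
  simp [ht, Finset.mul_sum, mul_assoc]

lemma e_apply_sub_one {k : ℕ} (hk1 : 1 ≤ k) (hk : k - 1 < n) :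
    e n a ⟨k - 1, hk⟩ = if k = a then 1 else 0 := by
  simp only [e, Nat.sub_add_cancel hk1]

lemma sum_e_mul (h1 : 1 ≤ a) (h2 : a ≤ n) (f : Fin n → ℚ) :
    ∑ j, e n a j * f j = f ⟨a - 1, by omega⟩ := by
  rw [Fintype.sum_eq_single ⟨a - 1, by omega⟩ fun j hj => ?_]
  · simp [e, Nat.sub_add_cancel h1]
  · have : (j : ℕ) + 1 ≠ a := fun h => hj (Fin.ext (by simp; omega))
    simp [e, this]

lemma ht_e (h1 : 1 ≤ a) (h2 : a ≤ n) : ht (e n a) = n - a + 1 / 2 := by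
  rw [ht, sum_e_mul h1 h2, Nat.cast_sub h1]
  push_cast
  ring

lemma inn_smul_e (h1 : 1 ≤ a) (h2 : a ≤ n) (c : ℚ) (x : Fin n → ℚ) :
    inn x (c • e n a) = c * x ⟨a - 1, by omega⟩ := by
  simp only [inn, Pi.smul_apply, smul_eq_mul, mul_left_comm (x _), ← Finset.mul_sum]
  simp only [mul_comm (x _), sum_e_mul h1 h2]

lemma pairing_two_smul_e (h1i : 1 ≤ i) (hin : i ≤ n) (x : Fin n → ℚ) :
    pairing x ((2 : ℚ) • e n i) = x ⟨i - 1, by omega⟩ := by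
  have hii : e n i ⟨i - 1, by omega⟩ = 1 := by simp [e_apply_sub_one h1i]
  rw [pairing, inn_smul_e h1i hin, inn_smul_e h1i hin, Pi.smul_apply, hii]
  ring

lemma ht_sRefl_two_smul_e (h1i : 1 ≤ i) (hin : i ≤ n) (x : Fin n → ℚ) :
    ht (sRefl ((2 : ℚ) • e n i) x) = ht x - x ⟨i - 1, by omega⟩ * (2 * (n - i) + 1) := by
  rw [sRefl, pairing_two_smul_e h1i hin, ht_sub, ht_smul, ht_smul, ht_e h1i hin]
  ring

end

namespace IsPosRoot

variable {n i : ℕ} {ξ : Fin n → ℚ}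

lemma ht_pos (hξ : IsPosRoot n ξ) : 0 < ht ξ := by
  rcases hξ with ⟨a, b, ha, hab, hbn, rfl⟩ | ⟨a, b, ha, hab, hbn, rfl⟩ | ⟨a, ha, han, rfl⟩
  · rw [ht_sub, ht_e ha (by omega), ht_e (by omega) hbn]
    have : (a : ℚ) < b := by exact_mod_cast hab
    linarith
  · rw [ht_add, ht_e ha (by omega), ht_e (by omega) hbn]
    have : (b : ℚ) ≤ n := by exact_mod_cast hbn
    have : (a : ℚ) < b := by exact_mod_cast hab
    linarith
  · rw [ht_smul, ht_e ha han]
    have : (a : ℚ) ≤ n := by exact_mod_cast han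
    linarith

lemma apply_pos_of_ht_sRefl_neg (hξ : IsPosRoot n ξ) (h1i : 1 ≤ i) (hin : i ≤ n)
    (hs : ht (sRefl ((2 : ℚ) • e n i) ξ) < 0) : 0 < ξ ⟨i - 1, by omega⟩ := by
  rw [ht_sRefl_two_smul_e h1i hin] at hs
  have hin' : (i : ℚ) ≤ n := by exact_mod_cast hin
  by_contra! h
  nlinarith [hξ.ht_pos]

lemma eq_of_ht_sRefl_two_smul_e_neg (hξ : IsPosRoot n ξ) (h1i : 1 ≤ i) (hin : i ≤ n)
    (hs : ht (sRefl ((2 : ℚ) • e n i) ξ) < 0) :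
    (∃ b, i < b ∧ b ≤ n ∧ ξ = e n i - e n b) ∨ (∃ b, i < b ∧ b ≤ n ∧ ξ = e n i + e n b) ∨
      ξ = (2 : ℚ) • e n i := by
  have hc := hξ.apply_pos_of_ht_sRefl_neg h1i hin hs
  rcases hξ with ⟨a, b, ha, hab, hbn, rfl⟩ | ⟨a, b, ha, hab, hbn, rfl⟩ | ⟨a, ha, han, rfl⟩
  · obtain rfl : i = a := by
      simp only [Pi.sub_apply, e_apply_sub_one h1i] at hc
      split_ifs at hc <;> first | assumption | norm_num at hc
    exact Or.inl ⟨b, hab, hbn, rfl⟩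
  · obtain rfl | rfl : i = a ∨ i = b := by
      simp only [Pi.add_apply, e_apply_sub_one h1i] at hc
      split_ifs at hc <;> first | (left; assumption) | (right; assumption) | norm_num at hc
    · exact Or.inr (Or.inl ⟨b, hab, hbn, rfl⟩)
    · rw [ht_sRefl_two_smul_e h1i hin, ht_add, ht_e ha (by omega), ht_e h1i hin] at hs
      simp only [Pi.add_apply, e_apply_sub_one h1i, if_neg hab.ne', ite_true] at hs
      have : (a : ℚ) < i := by exact_mod_cast hab
      linarith
  · obtain rfl : i = a := by
      simp only [Pi.smul_apply, e_apply_sub_one h1i] at hc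
      split_ifs at hc <;> first | assumption | norm_num at hc
    exact Or.inr (Or.inr rfl)

end IsPosRoot

/-- Let `(γ₁, γ₂)` be the bad pair
`γ₁ = α_i + ⋯ + α_{j−1} + 2(α_j + ⋯ + α_{n−1}) + β = e_i + e_j`,
`γ₂ = 2(α_i + ⋯ + α_{n−1}) + β = 2e_i` with `1 ≤ i < j ≤ n` in the root system `C_n`.
Let `ξ` be a positive root with `ht(γ₁) ≤ ht(ξ) < ht(γ₂)` such that `s_{γ₂}(ξ)` is a
negative root.  Then there exists `p` with `i < p ≤ j` such that
`ξ = α_i + ⋯ + α_{p−1} + 2(α_p + ⋯ + α_{n−1}) + β = e_i + e_p`. -/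
theorem bad_pair_reflection_negative_classification
    (n i j : ℕ) (h1i : 1 ≤ i) (hij : i < j) (hjn : j ≤ n)
    (ξ : Fin n → ℚ) (hξ : IsPosRoot n ξ)
    (hht₁ : ht (e n i + e n j) ≤ ht ξ)
    (hht₂ : ht ξ < ht ((2 : ℚ) • e n i))
    (hneg : IsPosRoot n (-(sRefl ((2 : ℚ) • e n i) ξ))) :
    ∃ p : ℕ, i < p ∧ p ≤ j ∧ ξ = e n i + e n p := by
  have hs : ht (sRefl ((2 : ℚ) • e n i) ξ) < 0 := by
    simpa [ht_neg] using hneg.ht_pos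
  have hjQ : (j : ℚ) ≤ n := by exact_mod_cast hjn
  rw [ht_add, ht_e h1i (by omega), ht_e (by omega) hjn] at hht₁
  rcases hξ.eq_of_ht_sRefl_two_smul_e_neg h1i (by omega) hs with
    ⟨b, hib, hbn, rfl⟩ | ⟨b, hib, hbn, rfl⟩ | rfl
  · rw [ht_sub, ht_e h1i (by omega), ht_e (by omega) hbn] at hht₁
    have : (b : ℚ) ≤ n := by exact_mod_cast hbn
    linarith
  · rw [ht_add, ht_e h1i (by omega), ht_e (by omega) hbn] at hht₁
    exact ⟨b, hib, by exact_mod_cast (show (b : ℚ) ≤ j by linarith), rfl⟩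
  · exact absurd hht₂ (lt_irrefl _)

end CnRoots
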